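/- In the cyclotomic quiver Hecke algebra R_n(Γ_{e,d}), the elements ē(i,A) (for i ∈ I^n, A ∈ SetPar_n), y_1,…,y_n and ψ_1,…,ψ_{n−1} satisfy: y_1 ē(i,A) = 0 if i_1 = 0; ē(i,A) = 0 if i_1 ≠ 0; Σ_{i,A} ē(i,A) = 1; ē(i,A) ē(i′,A′) = δ_{(i,A),(i′,A′)} ē(i,A); y_a ē(i,A) = ē(i,A) y_a; ψ_a ē(i,A) = ē(σ_a i, σ_a A) ψ_a; ψ_a y_{a+1} ē(i,A) = (y_a ψ_a + 1) ē(i,A) if i_a = i_{a+1} and a ∼_A (a+1), and = y_a ψ_a ē(i,A) otherwise; y_{a+1} ψ_a ē(i,A) = (ψ_a y_a + 1) ē(i,A) if i_a = i_{a+1} and a ∼_A (a+1), and = ψ_a y_a ē(i,A) otherwise; ψ_a² ē(i,A) = 0 if i_a = i_{a+1} and a ∼_A (a+1), = ē(i,A) if i_a ⌿ i_{a+1} or a ≁_A (a+1), = (y_{a+1} − y_a) ē(i,A) if i_a → i_{a+1} and a ∼_A (a+1), and = (y_a − y_{a+1}) ē(i,A) if i_a ← i_{a+1} and a ∼_A (a+1);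 finally ψ_{a+1} ψ_a ψ_{a+1} ē(i,A) = (ψ_a ψ_{a+1} ψ_a − 1) ē(i,A) if i_{a+2} = i_a → i_{a+1} and a ∼_A (a+1) ∼_A (a+2), = (ψ_a ψ_{a+1} ψ_a + 1) ē(i,A) if i_{a+2} = i_a ← i_{a+1} and a ∼_A (a+1) ∼_A (a+2), and = ψ_a ψ_{a+1} ψ_a ē(i,A) otherwise. -/

import Mathlib

open scoped Classical

noncomputable section

namespace KLR

/-- The vertex set `K = I × J = ℤ/eℤ × ℤ/dℤ` of the quiver `Γ_{e,d}`. -/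
abbrev K (e d : ℕ) : Type := ZMod e × ZMod d

/-- `k → k'` in `Γ_{e,d}`. -/
def kR {e d : ℕ} (k k' : K e d) : Prop := k'.1 = k.1 + 1 ∧ k'.2 = k.2

/-- `k ← k'` in `Γ_{e,d}`. -/
def kL {e d : ℕ} (k k' : K e d) : Prop := k'.1 = k.1 - 1 ∧ k'.2 = k.2

/-- `k ⌿ k'` in `Γ_{e,d}`. -/
def kFar {e d : ℕ} (k k' : K e d) : Prop :=
  (k'.1 ≠ k.1 - 1 ∧ k'.1 ≠ k.1 ∧ k'.1 ≠ k.1 + 1) ∨ k'.2 ≠ k.2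

/-- Generators of the cyclotomic quiver Hecke algebra `R_n(Γ_{e,d})` (0-based indexing for
`ψ`: `psi a h` is the paper's `ψ_{a+1}`). -/
inductive Gen (e d n : ℕ) : Type
  | e : (Fin n → K e d) → Gen e d n
  | y : Fin n → Gen e d n
  | psi : (a : ℕ) → a + 1 < n → Gen e d n

variable (𝕜 : Type) [Field 𝕜] (e d n : ℕ)

abbrev F : Type := FreeAlgebra 𝕜 (Gen e d n)

def Ee (k : Fin n → K e d) : F 𝕜 e d n := FreeAlgebra.ι 𝕜 (Gen.e k)

def Yy (a : Fin n) : F 𝕜 e d n := FreeAlgebra.ι 𝕜 (Gen.y a)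

def Ps (a : ℕ) (h : a + 1 < n) : F 𝕜 e d n := FreeAlgebra.ι 𝕜 (Gen.psi a h)

/-- The simple transposition `σ_a = (a, a+1)` (0-based). -/
def sw (a : ℕ) (h : a + 1 < n) : Equiv.Perm (Fin n) :=
  Equiv.swap ⟨a, by omega⟩ ⟨a + 1, h⟩

/-- The defining relations of the cyclotomic quiver Hecke algebra `R_n(Γ_{e,d})`. -/
inductive Rel : F 𝕜 e d n → F 𝕜 e d n → Prop
  | cyclo1 (h0 : 0 < n) (k : Fin n → K e d) (hk : (k ⟨0, h0⟩).1 = 0) :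
      Rel (Yy 𝕜 e d n ⟨0, h0⟩ * Ee 𝕜 e d n k) 0
  | cyclo2 (h0 : 0 < n) (k : Fin n → K e d) (hk : (k ⟨0, h0⟩).1 ≠ 0) :
      Rel (Ee 𝕜 e d n k) 0
  | unit [Fintype (ZMod e)] [Fintype (ZMod d)] :
      Rel (∑ k : Fin n → K e d, Ee 𝕜 e d n k) 1
  | orth (k k' : Fin n → K e d) :
      Rel (Ee 𝕜 e d n k * Ee 𝕜 e d n k') (if k = k' then Ee 𝕜 e d n k else 0)
  | ye (a : Fin n) (k : Fin n → K e d) :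
      Rel (Yy 𝕜 e d n a * Ee 𝕜 e d n k) (Ee 𝕜 e d n k * Yy 𝕜 e d n a)
  | pe (a : ℕ) (h : a + 1 < n) (k : Fin n → K e d) :
      Rel (Ps 𝕜 e d n a h * Ee 𝕜 e d n k)
        (Ee 𝕜 e d n (k ∘ (sw n a h)) * Ps 𝕜 e d n a h)
  | yy (a b : Fin n) :
      Rel (Yy 𝕜 e d n a * Yy 𝕜 e d n b) (Yy 𝕜 e d n b * Yy 𝕜 e d n a)
  | pp (a b : ℕ) (ha : a + 1 < n) (hb : b + 1 < n) (hab : a + 1 < b) :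
      Rel (Ps 𝕜 e d n a ha * Ps 𝕜 e d n b hb) (Ps 𝕜 e d n b hb * Ps 𝕜 e d n a ha)
  | py_eq (a : ℕ) (h : a + 1 < n) (k : Fin n → K e d)
      (hk : k ⟨a, by omega⟩ = k ⟨a + 1, h⟩) :
      Rel (Ps 𝕜 e d n a h * Yy 𝕜 e d n ⟨a + 1, h⟩ * Ee 𝕜 e d n k)
        ((Yy 𝕜 e d n ⟨a, by omega⟩ * Ps 𝕜 e d n a h + 1) * Ee 𝕜 e d n k)
  | py_ne (a : ℕ) (h : a + 1 < n) (k : Fin n → K e d)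
      (hk : k ⟨a, by omega⟩ ≠ k ⟨a + 1, h⟩) :
      Rel (Ps 𝕜 e d n a h * Yy 𝕜 e d n ⟨a + 1, h⟩ * Ee 𝕜 e d n k)
        (Yy 𝕜 e d n ⟨a, by omega⟩ * Ps 𝕜 e d n a h * Ee 𝕜 e d n k)
  | yp_eq (a : ℕ) (h : a + 1 < n) (k : Fin n → K e d)
      (hk : k ⟨a, by omega⟩ = k ⟨a + 1, h⟩) :
      Rel (Yy 𝕜 e d n ⟨a + 1, h⟩ * Ps 𝕜 e d n a h * Ee 𝕜 e d n k)
        ((Ps 𝕜 e d n a h * Yy 𝕜 e d n ⟨a, by omega⟩ + 1) * Ee 𝕜 e d n k)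
  | yp_ne (a : ℕ) (h : a + 1 < n) (k : Fin n → K e d)
      (hk : k ⟨a, by omega⟩ ≠ k ⟨a + 1, h⟩) :
      Rel (Yy 𝕜 e d n ⟨a + 1, h⟩ * Ps 𝕜 e d n a h * Ee 𝕜 e d n k)
        (Ps 𝕜 e d n a h * Yy 𝕜 e d n ⟨a, by omega⟩ * Ee 𝕜 e d n k)
  | sq_eq (a : ℕ) (h : a + 1 < n) (k : Fin n → K e d)
      (hk : k ⟨a, by omega⟩ = k ⟨a + 1, h⟩) :
      Rel (Ps 𝕜 e d n a h ^ 2 * Ee 𝕜 e d n k) 0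
  | sq_far (a : ℕ) (h : a + 1 < n) (k : Fin n → K e d)
      (hk : kFar (k ⟨a, by omega⟩) (k ⟨a + 1, h⟩)) :
      Rel (Ps 𝕜 e d n a h ^ 2 * Ee 𝕜 e d n k) (Ee 𝕜 e d n k)
  | sq_r (a : ℕ) (h : a + 1 < n) (k : Fin n → K e d)
      (hk : kR (k ⟨a, by omega⟩) (k ⟨a + 1, h⟩)) :
      Rel (Ps 𝕜 e d n a h ^ 2 * Ee 𝕜 e d n k)
        ((Yy 𝕜 e d n ⟨a + 1, h⟩ - Yy 𝕜 e d n ⟨a, by omega⟩) * Ee 𝕜 e d n k)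
  | sq_l (a : ℕ) (h : a + 1 < n) (k : Fin n → K e d)
      (hk : kL (k ⟨a, by omega⟩) (k ⟨a + 1, h⟩)) :
      Rel (Ps 𝕜 e d n a h ^ 2 * Ee 𝕜 e d n k)
        ((Yy 𝕜 e d n ⟨a, by omega⟩ - Yy 𝕜 e d n ⟨a + 1, h⟩) * Ee 𝕜 e d n k)
  | br_r (a : ℕ) (h : a + 2 < n) (k : Fin n → K e d)
      (hk : k ⟨a + 2, h⟩ = k ⟨a, by omega⟩
        ∧ kR (k ⟨a, by omega⟩) (k ⟨a + 1, by omega⟩)) :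
      Rel (Ps 𝕜 e d n (a + 1) h * Ps 𝕜 e d n a (by omega) * Ps 𝕜 e d n (a + 1) h
            * Ee 𝕜 e d n k)
        ((Ps 𝕜 e d n a (by omega) * Ps 𝕜 e d n (a + 1) h * Ps 𝕜 e d n a (by omega) - 1)
            * Ee 𝕜 e d n k)
  | br_l (a : ℕ) (h : a + 2 < n) (k : Fin n → K e d)
      (hk : k ⟨a + 2, h⟩ = k ⟨a, by omega⟩
        ∧ kL (k ⟨a, by omega⟩) (k ⟨a + 1, by omega⟩)) :
      Rel (Ps 𝕜 e d n (a + 1) h * Ps 𝕜 e d n a (by omega) * Ps 𝕜 e d n (a + 1) h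
            * Ee 𝕜 e d n k)
        ((Ps 𝕜 e d n a (by omega) * Ps 𝕜 e d n (a + 1) h * Ps 𝕜 e d n a (by omega) + 1)
            * Ee 𝕜 e d n k)
  | br_o (a : ℕ) (h : a + 2 < n) (k : Fin n → K e d)
      (hk : ¬(k ⟨a + 2, h⟩ = k ⟨a, by omega⟩
              ∧ kR (k ⟨a, by omega⟩) (k ⟨a + 1, by omega⟩))
          ∧ ¬(k ⟨a + 2, h⟩ = k ⟨a, by omega⟩
              ∧ kL (k ⟨a, by omega⟩) (k ⟨a + 1, by omega⟩))) :
      Rel (Ps 𝕜 e d n (a + 1) h * Ps 𝕜 e d n a (by omega) * Ps 𝕜 e d n (a + 1) h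
            * Ee 𝕜 e d n k)
        (Ps 𝕜 e d n a (by omega) * Ps 𝕜 e d n (a + 1) h * Ps 𝕜 e d n a (by omega)
            * Ee 𝕜 e d n k)

/-- The cyclotomic quiver Hecke algebra `R_n(Γ_{e,d})`. -/
abbrev R : Type := RingQuot (Rel 𝕜 e d n)

def π : F 𝕜 e d n →ₐ[𝕜] R 𝕜 e d n := RingQuot.mkAlgHom 𝕜 (Rel 𝕜 e d n)

def ek (k : Fin n → K e d) : R 𝕜 e d n := π 𝕜 e d n (Ee 𝕜 e d n k)

def y (a : Fin n) : R 𝕜 e d n := π 𝕜 e d n (Yy 𝕜 e d n a)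

def psi (a : ℕ) (h : a + 1 < n) : R 𝕜 e d n := π 𝕜 e d n (Ps 𝕜 e d n a h)

instance (n : ℕ) : Finite (Setoid (Fin n)) :=
  Finite.of_injective (fun A : Setoid (Fin n) => A.r)
    (fun A B h => by cases A; cases B; simp only at h; subst h; rfl)

noncomputable instance (n : ℕ) : Fintype (Setoid (Fin n)) := Fintype.ofFinite _

/-- `ē(i,A) = Σ e(k)`, the sum over all `k ∈ K^n` whose `I`-components are `i` and whose
`J`-components `j` satisfy `j_a = j_b ⇔ a ∼_A b`. -/
def ebar [NeZero d] (i : Fin n → ZMod e) (A : Setoid (Fin n)) : R 𝕜 e d n :=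
  ∑ j ∈ Finset.univ.filter
      (fun j : Fin n → ZMod d => ∀ a b : Fin n, j a = j b ↔ A.r a b),
    ek 𝕜 e d n (fun x => (i x, j x))

/-- The action of a permutation on set partitions. -/
def permSetoid {n : ℕ} (σ : Equiv.Perm (Fin n)) (A : Setoid (Fin n)) : Setoid (Fin n) where
  r x y := A.r (σ.symm x) (σ.symm y)
  iseqv := ⟨fun _ => A.iseqv.refl _, fun h => A.iseqv.symm h, fun h h' => A.iseqv.trans h h'⟩


section Helpers

variable {𝕜 : Type} [Field 𝕜] {e d n : ℕ}

lemma relq {x y : F 𝕜 e d n} (h : Rel 𝕜 e d n x y) :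
    π 𝕜 e d n x = π 𝕜 e d n y := RingQuot.mkAlgHom_rel 𝕜 h

lemma q_cyclo1 (h0 : 0 < n) (k : Fin n → K e d) (hk : (k ⟨0, h0⟩).1 = 0) :
    y 𝕜 e d n ⟨0, h0⟩ * ek 𝕜 e d n k = 0 := by
  simpa only [map_mul, map_zero, ek, y, psi] using relq (Rel.cyclo1 (𝕜 := 𝕜) (e := e) (d := d) (n := n) h0 k hk)

lemma q_cyclo2 (h0 : 0 < n) (k : Fin n → K e d) (hk : (k ⟨0, h0⟩).1 ≠ 0) :
    ek 𝕜 e d n k = 0 := by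
  simpa only [map_zero, ek, y, psi] using relq (Rel.cyclo2 (𝕜 := 𝕜) (e := e) (d := d) (n := n) h0 k hk)

lemma q_unit [Fintype (ZMod e)] [Fintype (ZMod d)] :
    ∑ k : Fin n → K e d, ek 𝕜 e d n k = (1 : R 𝕜 e d n) := by
  simpa only [map_sum, map_one, ek, y, psi] using relq (Rel.unit (𝕜 := 𝕜) (e := e) (d := d) (n := n))

lemma q_orth (k k' : Fin n → K e d) :
    ek 𝕜 e d n k * ek 𝕜 e d n k' = if k = k' then ek 𝕜 e d n k else 0 := by
  simpa only [map_mul, apply_ite (π 𝕜 e d n), map_zero, ek, y, psi] using relq (Rel.orth (𝕜 := 𝕜) (e := e) (d := d) (n := n) k k')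

lemma q_ye (a : Fin n) (k : Fin n → K e d) :
    y 𝕜 e d n a * ek 𝕜 e d n k = ek 𝕜 e d n k * y 𝕜 e d n a := by
  simpa only [map_mul, ek, y, psi] using relq (Rel.ye (𝕜 := 𝕜) (e := e) (d := d) (n := n) a k)

lemma q_pe (a : ℕ) (h : a + 1 < n) (k : Fin n → K e d) :
    psi 𝕜 e d n a h * ek 𝕜 e d n k
      = ek 𝕜 e d n (k ∘ (sw n a h)) * psi 𝕜 e d n a h := by
  simpa only [map_mul, ek, y, psi] using relq (Rel.pe (𝕜 := 𝕜) (e := e) (d := d) (n := n) a h k)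

lemma q_py_eq (a : ℕ) (h : a + 1 < n) (k : Fin n → K e d)
    (hk : k ⟨a, by omega⟩ = k ⟨a + 1, h⟩) :
    psi 𝕜 e d n a h * y 𝕜 e d n ⟨a + 1, h⟩ * ek 𝕜 e d n k
      = (y 𝕜 e d n ⟨a, by omega⟩ * psi 𝕜 e d n a h + 1) * ek 𝕜 e d n k := by
  simpa only [map_mul, map_add, map_one, ek, y, psi] using relq (Rel.py_eq (𝕜 := 𝕜) (e := e) (d := d) (n := n) a h k hk)

lemma q_py_ne (a : ℕ) (h : a + 1 < n) (k : Fin n → K e d)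
    (hk : k ⟨a, by omega⟩ ≠ k ⟨a + 1, h⟩) :
    psi 𝕜 e d n a h * y 𝕜 e d n ⟨a + 1, h⟩ * ek 𝕜 e d n k
      = y 𝕜 e d n ⟨a, by omega⟩ * psi 𝕜 e d n a h * ek 𝕜 e d n k := by
  simpa only [map_mul, ek, y, psi] using relq (Rel.py_ne (𝕜 := 𝕜) (e := e) (d := d) (n := n) a h k hk)

lemma q_yp_eq (a : ℕ) (h : a + 1 < n) (k : Fin n → K e d)
    (hk : k ⟨a, by omega⟩ = k ⟨a + 1, h⟩) :
    y 𝕜 e d n ⟨a + 1, h⟩ * psi 𝕜 e d n a h * ek 𝕜 e d n k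
      = (psi 𝕜 e d n a h * y 𝕜 e d n ⟨a, by omega⟩ + 1) * ek 𝕜 e d n k := by
  simpa only [map_mul, map_add, map_one, ek, y, psi] using relq (Rel.yp_eq (𝕜 := 𝕜) (e := e) (d := d) (n := n) a h k hk)

lemma q_yp_ne (a : ℕ) (h : a + 1 < n) (k : Fin n → K e d)
    (hk : k ⟨a, by omega⟩ ≠ k ⟨a + 1, h⟩) :
    y 𝕜 e d n ⟨a + 1, h⟩ * psi 𝕜 e d n a h * ek 𝕜 e d n k
      = psi 𝕜 e d n a h * y 𝕜 e d n ⟨a, by omega⟩ * ek 𝕜 e d n k := by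
  simpa only [map_mul, ek, y, psi] using relq (Rel.yp_ne (𝕜 := 𝕜) (e := e) (d := d) (n := n) a h k hk)

lemma q_sq_eq (a : ℕ) (h : a + 1 < n) (k : Fin n → K e d)
    (hk : k ⟨a, by omega⟩ = k ⟨a + 1, h⟩) :
    psi 𝕜 e d n a h ^ 2 * ek 𝕜 e d n k = 0 := by
  simpa only [map_mul, map_pow, map_zero, ek, y, psi] using relq (Rel.sq_eq (𝕜 := 𝕜) (e := e) (d := d) (n := n) a h k hk)

lemma q_sq_far (a : ℕ) (h : a + 1 < n) (k : Fin n → K e d)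
    (hk : kFar (k ⟨a, by omega⟩) (k ⟨a + 1, h⟩)) :
    psi 𝕜 e d n a h ^ 2 * ek 𝕜 e d n k = ek 𝕜 e d n k := by
  simpa only [map_mul, map_pow, ek, y, psi] using relq (Rel.sq_far (𝕜 := 𝕜) (e := e) (d := d) (n := n) a h k hk)

lemma q_sq_r (a : ℕ) (h : a + 1 < n) (k : Fin n → K e d)
    (hk : kR (k ⟨a, by omega⟩) (k ⟨a + 1, h⟩)) :
    psi 𝕜 e d n a h ^ 2 * ek 𝕜 e d n k
      = (y 𝕜 e d n ⟨a + 1, h⟩ - y 𝕜 e d n ⟨a, by omega⟩) * ek 𝕜 e d n k := by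
  simpa only [map_mul, map_pow, map_sub, ek, y, psi] using relq (Rel.sq_r (𝕜 := 𝕜) (e := e) (d := d) (n := n) a h k hk)

lemma q_sq_l (a : ℕ) (h : a + 1 < n) (k : Fin n → K e d)
    (hk : kL (k ⟨a, by omega⟩) (k ⟨a + 1, h⟩)) :
    psi 𝕜 e d n a h ^ 2 * ek 𝕜 e d n k
      = (y 𝕜 e d n ⟨a, by omega⟩ - y 𝕜 e d n ⟨a + 1, h⟩) * ek 𝕜 e d n k := by
  simpa only [map_mul, map_pow, map_sub, ek, y, psi] using relq (Rel.sq_l (𝕜 := 𝕜) (e := e) (d := d) (n := n) a h k hk)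

lemma q_br_r (a : ℕ) (h : a + 2 < n) (k : Fin n → K e d)
    (hk : k ⟨a + 2, h⟩ = k ⟨a, by omega⟩
      ∧ kR (k ⟨a, by omega⟩) (k ⟨a + 1, by omega⟩)) :
    psi 𝕜 e d n (a + 1) h * psi 𝕜 e d n a (by omega) * psi 𝕜 e d n (a + 1) h
        * ek 𝕜 e d n k
      = (psi 𝕜 e d n a (by omega) * psi 𝕜 e d n (a + 1) h * psi 𝕜 e d n a (by omega) - 1)
          * ek 𝕜 e d n k := by
  simpa only [map_mul, map_sub, map_one, ek, y, psi] using relq (Rel.br_r (𝕜 := 𝕜) (e := e) (d := d) (n := n) a h k hk)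

lemma q_br_l (a : ℕ) (h : a + 2 < n) (k : Fin n → K e d)
    (hk : k ⟨a + 2, h⟩ = k ⟨a, by omega⟩
      ∧ kL (k ⟨a, by omega⟩) (k ⟨a + 1, by omega⟩)) :
    psi 𝕜 e d n (a + 1) h * psi 𝕜 e d n a (by omega) * psi 𝕜 e d n (a + 1) h
        * ek 𝕜 e d n k
      = (psi 𝕜 e d n a (by omega) * psi 𝕜 e d n (a + 1) h * psi 𝕜 e d n a (by omega) + 1)
          * ek 𝕜 e d n k := by
  simpa only [map_mul, map_add, map_one, ek, y, psi] using relq (Rel.br_l (𝕜 := 𝕜) (e := e) (d := d) (n := n) a h k hk)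

lemma q_br_o (a : ℕ) (h : a + 2 < n) (k : Fin n → K e d)
    (hk : ¬(k ⟨a + 2, h⟩ = k ⟨a, by omega⟩
            ∧ kR (k ⟨a, by omega⟩) (k ⟨a + 1, by omega⟩))
        ∧ ¬(k ⟨a + 2, h⟩ = k ⟨a, by omega⟩
            ∧ kL (k ⟨a, by omega⟩) (k ⟨a + 1, by omega⟩))) :
    psi 𝕜 e d n (a + 1) h * psi 𝕜 e d n a (by omega) * psi 𝕜 e d n (a + 1) h
        * ek 𝕜 e d n k
      = psi 𝕜 e d n a (by omega) * psi 𝕜 e d n (a + 1) h * psi 𝕜 e d n a (by omega)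
          * ek 𝕜 e d n k := by
  simpa only [map_mul, ek, y, psi] using relq (Rel.br_o (𝕜 := 𝕜) (e := e) (d := d) (n := n) a h k hk)

lemma adm_iff_ker {A : Setoid (Fin n)} {j : Fin n → ZMod d} :
    (∀ a b : Fin n, j a = j b ↔ A.r a b) ↔ A = Setoid.ker j := by
  constructor
  · intro hadm
    exact Setoid.ext fun a b => ((hadm a b)).symm
  · rintro rfl a b
    exact Iff.rfl

lemma sum_over_setoids [NeZero d] {M : Type} [AddCommMonoid M]
    (g : (Fin n → ZMod d) → M) :
    (∑ A : Setoid (Fin n), ∑ j ∈ Finset.univ.filter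
        (fun j : Fin n → ZMod d => ∀ a b : Fin n, j a = j b ↔ A.r a b), g j)
      = ∑ j : Fin n → ZMod d, g j := by
  simp only [Finset.sum_filter]
  rw [Finset.sum_comm]
  refine Finset.sum_congr rfl fun j _ => ?_
  rw [Finset.sum_congr rfl fun A _ =>
    if_congr (adm_iff_ker (A := A) (j := j)) rfl rfl]
  rw [Finset.sum_ite_eq' Finset.univ (Setoid.ker j) fun _ => g j,
    if_pos (Finset.mem_univ _)]

end Helpers

end KLR

open KLR in
/-- in the cyclotomic quiver Hecke algebra `R_n(Γ_{e,d})`, the elements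
`ē(i,A)`, `y_a`, `ψ_a` satisfy the listed relations (0-based indices). -/
theorem statement15 (𝕜 : Type) [Field 𝕜] (e d n : ℕ) (he : e = 0 ∨ 3 ≤ e)
    (hd : 0 < d) [NeZero d] :
    -- y_1 ē(i,A) = 0 if i_1 = 0
    (∀ (h0 : 0 < n) (i : Fin n → ZMod e) (A : Setoid (Fin n)), i ⟨0, h0⟩ = 0 →
      y 𝕜 e d n ⟨0, h0⟩ * ebar 𝕜 e d n i A = 0)
    -- ē(i,A) = 0 if i_1 ≠ 0
    ∧ (∀ (h0 : 0 < n) (i : Fin n → ZMod e) (A : Setoid (Fin n)), i ⟨0, h0⟩ ≠ 0 →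
      ebar 𝕜 e d n i A = 0)
    -- Σ_{i,A} ē(i,A) = 1
    ∧ (∀ [Fintype (ZMod e)],
      ∑ i : Fin n → ZMod e, ∑ A : Setoid (Fin n), ebar 𝕜 e d n i A = 1)
    -- orthogonality
    ∧ (∀ (i i' : Fin n → ZMod e) (A A' : Setoid (Fin n)),
      ebar 𝕜 e d n i A * ebar 𝕜 e d n i' A'
        = if i = i' ∧ A = A' then ebar 𝕜 e d n i A else 0)
    -- y_a ē(i,A) = ē(i,A) y_a
    ∧ (∀ (a : Fin n) (i : Fin n → ZMod e) (A : Setoid (Fin n)),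
      y 𝕜 e d n a * ebar 𝕜 e d n i A = ebar 𝕜 e d n i A * y 𝕜 e d n a)
    -- ψ_a ē(i,A) = ē(σ_a i, σ_a A) ψ_a
    ∧ (∀ (a : ℕ) (h : a + 1 < n) (i : Fin n → ZMod e) (A : Setoid (Fin n)),
      psi 𝕜 e d n a h * ebar 𝕜 e d n i A
        = ebar 𝕜 e d n (i ∘ (sw n a h)) (permSetoid (sw n a h) A) * psi 𝕜 e d n a h)
    -- ψ_a y_{a+1} ē(i,A)
    ∧ (∀ (a : ℕ) (h : a + 1 < n) (i : Fin n → ZMod e) (A : Setoid (Fin n)),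
      (i ⟨a, by omega⟩ = i ⟨a + 1, h⟩ ∧ A.r ⟨a, by omega⟩ ⟨a + 1, h⟩ →
        psi 𝕜 e d n a h * y 𝕜 e d n ⟨a + 1, h⟩ * ebar 𝕜 e d n i A
          = (y 𝕜 e d n ⟨a, by omega⟩ * psi 𝕜 e d n a h + 1) * ebar 𝕜 e d n i A)
      ∧ (¬(i ⟨a, by omega⟩ = i ⟨a + 1, h⟩ ∧ A.r ⟨a, by omega⟩ ⟨a + 1, h⟩) →
        psi 𝕜 e d n a h * y 𝕜 e d n ⟨a + 1, h⟩ * ebar 𝕜 e d n i A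
          = y 𝕜 e d n ⟨a, by omega⟩ * psi 𝕜 e d n a h * ebar 𝕜 e d n i A))
    -- y_{a+1} ψ_a ē(i,A)
    ∧ (∀ (a : ℕ) (h : a + 1 < n) (i : Fin n → ZMod e) (A : Setoid (Fin n)),
      (i ⟨a, by omega⟩ = i ⟨a + 1, h⟩ ∧ A.r ⟨a, by omega⟩ ⟨a + 1, h⟩ →
        y 𝕜 e d n ⟨a + 1, h⟩ * psi 𝕜 e d n a h * ebar 𝕜 e d n i A
          = (psi 𝕜 e d n a h * y 𝕜 e d n ⟨a, by omega⟩ + 1) * ebar 𝕜 e d n i A)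
      ∧ (¬(i ⟨a, by omega⟩ = i ⟨a + 1, h⟩ ∧ A.r ⟨a, by omega⟩ ⟨a + 1, h⟩) →
        y 𝕜 e d n ⟨a + 1, h⟩ * psi 𝕜 e d n a h * ebar 𝕜 e d n i A
          = psi 𝕜 e d n a h * y 𝕜 e d n ⟨a, by omega⟩ * ebar 𝕜 e d n i A))
    -- ψ_a² ē(i,A)
    ∧ (∀ (a : ℕ) (h : a + 1 < n) (i : Fin n → ZMod e) (A : Setoid (Fin n)),
      (i ⟨a, by omega⟩ = i ⟨a + 1, h⟩ ∧ A.r ⟨a, by omega⟩ ⟨a + 1, h⟩ →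
        psi 𝕜 e d n a h ^ 2 * ebar 𝕜 e d n i A = 0)
      ∧ ((i ⟨a + 1, h⟩ ≠ i ⟨a, by omega⟩ - 1 ∧ i ⟨a + 1, h⟩ ≠ i ⟨a, by omega⟩
            ∧ i ⟨a + 1, h⟩ ≠ i ⟨a, by omega⟩ + 1)
          ∨ ¬ A.r ⟨a, by omega⟩ ⟨a + 1, h⟩ →
        psi 𝕜 e d n a h ^ 2 * ebar 𝕜 e d n i A = ebar 𝕜 e d n i A)
      ∧ (i ⟨a + 1, h⟩ = i ⟨a, by omega⟩ + 1 ∧ A.r ⟨a, by omega⟩ ⟨a + 1, h⟩ →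
        psi 𝕜 e d n a h ^ 2 * ebar 𝕜 e d n i A
          = (y 𝕜 e d n ⟨a + 1, h⟩ - y 𝕜 e d n ⟨a, by omega⟩) * ebar 𝕜 e d n i A)
      ∧ (i ⟨a + 1, h⟩ = i ⟨a, by omega⟩ - 1 ∧ A.r ⟨a, by omega⟩ ⟨a + 1, h⟩ →
        psi 𝕜 e d n a h ^ 2 * ebar 𝕜 e d n i A
          = (y 𝕜 e d n ⟨a, by omega⟩ - y 𝕜 e d n ⟨a + 1, h⟩) * ebar 𝕜 e d n i A))
    -- braid relations
    ∧ (∀ (a : ℕ) (h : a + 2 < n) (i : Fin n → ZMod e) (A : Setoid (Fin n)),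
      ((i ⟨a + 2, h⟩ = i ⟨a, by omega⟩ ∧ i ⟨a + 1, by omega⟩ = i ⟨a, by omega⟩ + 1
          ∧ A.r ⟨a, by omega⟩ ⟨a + 1, by omega⟩ ∧ A.r ⟨a + 1, by omega⟩ ⟨a + 2, h⟩) →
        psi 𝕜 e d n (a + 1) h * psi 𝕜 e d n a (by omega) * psi 𝕜 e d n (a + 1) h
            * ebar 𝕜 e d n i A
          = (psi 𝕜 e d n a (by omega) * psi 𝕜 e d n (a + 1) h * psi 𝕜 e d n a (by omega)
              - 1) * ebar 𝕜 e d n i A)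
      ∧ ((i ⟨a + 2, h⟩ = i ⟨a, by omega⟩ ∧ i ⟨a + 1, by omega⟩ = i ⟨a, by omega⟩ - 1
          ∧ A.r ⟨a, by omega⟩ ⟨a + 1, by omega⟩ ∧ A.r ⟨a + 1, by omega⟩ ⟨a + 2, h⟩) →
        psi 𝕜 e d n (a + 1) h * psi 𝕜 e d n a (by omega) * psi 𝕜 e d n (a + 1) h
            * ebar 𝕜 e d n i A
          = (psi 𝕜 e d n a (by omega) * psi 𝕜 e d n (a + 1) h * psi 𝕜 e d n a (by omega)
              + 1) * ebar 𝕜 e d n i A)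
      ∧ ((¬(i ⟨a + 2, h⟩ = i ⟨a, by omega⟩ ∧ i ⟨a + 1, by omega⟩ = i ⟨a, by omega⟩ + 1
            ∧ A.r ⟨a, by omega⟩ ⟨a + 1, by omega⟩ ∧ A.r ⟨a + 1, by omega⟩ ⟨a + 2, h⟩)
          ∧ ¬(i ⟨a + 2, h⟩ = i ⟨a, by omega⟩ ∧ i ⟨a + 1, by omega⟩ = i ⟨a, by omega⟩ - 1
            ∧ A.r ⟨a, by omega⟩ ⟨a + 1, by omega⟩ ∧ A.r ⟨a + 1, by omega⟩ ⟨a + 2, h⟩)) →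
        psi 𝕜 e d n (a + 1) h * psi 𝕜 e d n a (by omega) * psi 𝕜 e d n (a + 1) h
            * ebar 𝕜 e d n i A
          = psi 𝕜 e d n a (by omega) * psi 𝕜 e d n (a + 1) h * psi 𝕜 e d n a (by omega)
              * ebar 𝕜 e d n i A)) := by
  classical
  have memadm : ∀ {A : Setoid (Fin n)} {j : Fin n → ZMod d},
      j ∈ Finset.univ.filter
        (fun j : Fin n → ZMod d => ∀ a b : Fin n, j a = j b ↔ A.r a b) →
      ∀ a b : Fin n, j a = j b ↔ A.r a b := fun hj => (Finset.mem_filter.mp hj).2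
  refine ⟨?_, ?_, ?_, ?_, ?_, ?_, ?_, ?_, ?_, ?_⟩
  -- 1. cyclotomic 1
  · intro h0 i A hi
    rw [ebar, Finset.mul_sum]
    exact Finset.sum_eq_zero fun j _ => q_cyclo1 h0 _ hi
  -- 2. cyclotomic 2
  · intro h0 i A hi
    rw [ebar]
    exact Finset.sum_eq_zero fun j _ => q_cyclo2 h0 _ hi
  -- 3. sum to 1
  · intro _
    have step1 : ∀ i : Fin n → ZMod e, ∑ A : Setoid (Fin n), ebar 𝕜 e d n i A
        = ∑ j : Fin n → ZMod d, ek 𝕜 e d n (fun t => (i t, j t)) := by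
      intro i
      simp only [ebar]
      exact sum_over_setoids _
    rw [Finset.sum_congr rfl fun i _ => step1 i,
      ← q_unit (𝕜 := 𝕜) (e := e) (d := d) (n := n),
      Fintype.sum_equiv (Equiv.arrowProdEquivProdArrow (Fin n) (fun _ => ZMod e) (fun _ => ZMod d))
        (fun k => ek 𝕜 e d n k) (fun p => ek 𝕜 e d n fun t => (p.1 t, p.2 t)) (fun k => rfl),
      Fintype.sum_prod_type]
  -- 4. orthogonality
  · intro i i' A A'
    by_cases hc : i = i' ∧ A = A'
    · obtain ⟨rfl, rfl⟩ := hc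
      rw [if_pos ⟨rfl, rfl⟩]
      simp only [ebar]
      rw [Finset.sum_mul_sum]
      refine Finset.sum_congr rfl fun j hj => ?_
      rw [Finset.sum_congr rfl fun j' _ => q_orth (𝕜 := 𝕜) _ _]
      have conv1 : ∀ j' : Fin n → ZMod d,
          (if (fun t => (i t, j t)) = (fun t : Fin n => (i t, j' t))
            then ek 𝕜 e d n (fun t => (i t, j t)) else 0)
          = (if j' = j then ek 𝕜 e d n (fun t => (i t, j t)) else 0) := by
        intro j'
        refine if_congr ⟨fun hh => ?_, fun hh => by rw [hh]⟩ rfl rfl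
        funext t
        exact (congrArg Prod.snd (congrFun hh t)).symm
      rw [Finset.sum_congr rfl fun j' _ => conv1 j',
        Finset.sum_ite_eq' _ j fun _ => ek 𝕜 e d n (fun t => (i t, j t)), if_pos hj]
    · rw [if_neg hc, ebar, ebar, Finset.sum_mul_sum]
      refine Finset.sum_eq_zero fun j hj => Finset.sum_eq_zero fun j' hj' => ?_
      rw [q_orth, if_neg]
      intro hk
      have hii : i = i' := funext fun t => congrArg Prod.fst (congrFun hk t)
      have hjj : j = j' := funext fun t => congrArg Prod.snd (congrFun hk t)
      refine hc ⟨hii, Setoid.ext fun x z => ?_⟩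
      exact ((memadm hj x z).symm.trans (hjj ▸ memadm hj' x z))
  -- 5. y commutes
  · intro a i A
    rw [ebar, Finset.mul_sum, Finset.sum_mul]
    exact Finset.sum_congr rfl fun j _ => q_ye a _
  -- 6. psi and ebar
  · intro a h i A
    have hsymm : (sw n a h).symm = sw n a h := Equiv.symm_swap _ _
    have hswsw : ∀ x : Fin n, sw n a h (sw n a h x) = x := fun x => by
      conv_lhs => rw [← hsymm]
      exact (sw n a h).symm_apply_apply x
    rw [ebar, Finset.mul_sum, ebar, Finset.sum_mul,
      Finset.sum_congr rfl fun j _ => q_pe a h _]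
    refine Finset.sum_nbij' (fun j => j ∘ (sw n a h)) (fun j => j ∘ (sw n a h))
      ?_ ?_ ?_ ?_ ?_
    · intro j hj
      simp only [Finset.mem_filter, Finset.mem_univ, true_and]
      intro x z
      have := memadm hj (sw n a h x) (sw n a h z)
      change _ ↔ A.r ((sw n a h).symm x) ((sw n a h).symm z)
      rw [hsymm]
      exact this
    · intro j' hj'
      simp only [Finset.mem_filter, Finset.mem_univ, true_and]
      intro x z
      have := (Finset.mem_filter.mp hj').2 (sw n a h x) (sw n a h z)
      change _ ↔ A.r ((sw n a h).symm (sw n a h x)) ((sw n a h).symm (sw n a h z)) at this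
      rw [Equiv.symm_apply_apply, Equiv.symm_apply_apply] at this
      exact this
    · intro j _
      funext x
      simp [Function.comp, hswsw]
    · intro j _
      funext x
      simp [Function.comp, hswsw]
    · intro j _
      rfl
  -- 7. psi y
  · intro a h i A
    constructor
    · rintro ⟨hi, hA⟩
      rw [ebar, Finset.mul_sum, Finset.mul_sum]
      refine Finset.sum_congr rfl fun j hj => q_py_eq a h _ ?_
      have := (memadm hj _ _).mpr hA
      simp only [Prod.mk.injEq]
      exact ⟨hi, this⟩
    · intro hne
      rw [ebar, Finset.mul_sum, Finset.mul_sum]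
      refine Finset.sum_congr rfl fun j hj => q_py_ne a h _ ?_
      intro hkk
      exact hne ⟨congrArg Prod.fst hkk, (memadm hj _ _).mp (congrArg Prod.snd hkk)⟩
  -- 8. y psi
  · intro a h i A
    constructor
    · rintro ⟨hi, hA⟩
      rw [ebar, Finset.mul_sum, Finset.mul_sum]
      refine Finset.sum_congr rfl fun j hj => q_yp_eq a h _ ?_
      simp only [Prod.mk.injEq]
      exact ⟨hi, (memadm hj _ _).mpr hA⟩
    · intro hne
      rw [ebar, Finset.mul_sum, Finset.mul_sum]
      refine Finset.sum_congr rfl fun j hj => q_yp_ne a h _ ?_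
      intro hkk
      exact hne ⟨congrArg Prod.fst hkk, (memadm hj _ _).mp (congrArg Prod.snd hkk)⟩
  -- 9. psi squared
  · intro a h i A
    refine ⟨?_, ?_, ?_, ?_⟩
    · rintro ⟨hi, hA⟩
      rw [ebar, Finset.mul_sum]
      refine Finset.sum_eq_zero fun j hj => q_sq_eq a h _ ?_
      simp only [Prod.mk.injEq]
      exact ⟨hi, (memadm hj _ _).mpr hA⟩
    · intro hfar
      rw [ebar, Finset.mul_sum]
      refine Finset.sum_congr rfl fun j hj => q_sq_far a h _ ?_
      by_cases hA : A.r ⟨a, by omega⟩ ⟨a + 1, h⟩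
      · rcases hfar with hfar | hfar
        · exact Or.inl hfar
        · exact absurd hA hfar
      · exact Or.inr fun hjj => hA (A.symm ((memadm hj _ _).mp hjj))
    · rintro ⟨hi, hA⟩
      rw [ebar, Finset.mul_sum, Finset.mul_sum]
      refine Finset.sum_congr rfl fun j hj => q_sq_r a h _ ?_
      exact ⟨hi, (memadm hj _ _).mpr (A.symm hA)⟩
    · rintro ⟨hi, hA⟩
      rw [ebar, Finset.mul_sum, Finset.mul_sum]
      refine Finset.sum_congr rfl fun j hj => q_sq_l a h _ ?_
      exact ⟨hi, (memadm hj _ _).mpr (A.symm hA)⟩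
  -- 10. braid
  · intro a h i A
    refine ⟨?_, ?_, ?_⟩
    · rintro ⟨h2, h1, hA1, hA2⟩
      rw [ebar, Finset.mul_sum, Finset.mul_sum]
      refine Finset.sum_congr rfl fun j hj => q_br_r a h _ ?_
      refine ⟨?_, h1, (memadm hj _ _).mpr (A.symm hA1)⟩
      simp only [Prod.mk.injEq]
      exact ⟨h2, (memadm hj _ _).mpr (A.symm (A.trans hA1 hA2))⟩
    · rintro ⟨h2, h1, hA1, hA2⟩
      rw [ebar, Finset.mul_sum, Finset.mul_sum]
      refine Finset.sum_congr rfl fun j hj => q_br_l a h _ ?_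
      refine ⟨?_, h1, (memadm hj _ _).mpr (A.symm hA1)⟩
      simp only [Prod.mk.injEq]
      exact ⟨h2, (memadm hj _ _).mpr (A.symm (A.trans hA1 hA2))⟩
    · rintro ⟨hR, hL⟩
      rw [ebar, Finset.mul_sum, Finset.mul_sum]
      refine Finset.sum_congr rfl fun j hj => q_br_o a h _ ⟨?_, ?_⟩
      · rintro ⟨hkeq, hk1, hk2⟩
        refine hR ⟨congrArg Prod.fst hkeq, hk1, ?_, ?_⟩
        · exact A.symm ((memadm hj _ _).mp hk2)
        · refine A.trans ((memadm hj _ _).mp hk2) ?_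
          exact A.symm ((memadm hj _ _).mp (congrArg Prod.snd hkeq))
      · rintro ⟨hkeq, hk1, hk2⟩
        refine hL ⟨congrArg Prod.fst hkeq, hk1, ?_, ?_⟩
        · exact A.symm ((memadm hj _ _).mp hk2)
        · refine A.trans ((memadm hj _ _).mp hk2) ?_
          exact A.symm ((memadm hj _ _).mp (congrArg Prod.snd hkeq))


end
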